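/- (Planarity, Theorem 1.) Let r satisfy the relativistic two-body equation and let h(t) = r(t) × r'(t). If h(0) ≠ 0, then for every t one has ⟨r(t), h(0)⟩ = 0 and ⟨r'(t), h(0)⟩ = 0; that is, the motion takes place in the fixed plane through the origin orthogonal to h(0). -/

import Mathlib

/-!
Since `r''` is a combination of `r` and `r'`, the angular momentum obeys
`h' = r × r'' = β h` with `β = 4ε⟨r, r'⟩ / ‖r‖³`. Hence `h t = exp (∫₀ᵗ β) • h 0` is a nonzero
multiple of `h 0`, and `r t`, `r' t`, being orthogonal to `h t`, are orthogonal to `h 0`.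
-/

noncomputable def cross3 (a b : EuclideanSpace ℝ (Fin 3)) : EuclideanSpace ℝ (Fin 3) :=
  WithLp.toLp 2 ![a 1 * b 2 - a 2 * b 1, a 2 * b 0 - a 0 * b 2, a 0 * b 1 - a 1 * b 0]

open Real

theorem eq_exp_integral_smul_of_hasDerivAt {E : Type*} [NormedAddCommGroup E] [NormedSpace ℝ E]
    {f : ℝ → E} {c : ℝ → ℝ} (hc : Continuous c) (hf : ∀ t, HasDerivAt f (c t • f t) t)
    (a t : ℝ) : f t = exp (∫ s in a..t, c s) • f a := by
  set C : ℝ → ℝ := fun u => ∫ s in a..u, c s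
  have hC (u : ℝ) : HasDerivAt C (c u) u := (hc.integral_hasStrictDerivAt a u).hasDerivAt
  have hg (u : ℝ) : HasDerivAt (fun u => exp (-C u) • f u) 0 u := by
    convert (hC u).fun_neg.exp.fun_smul (hf u) using 1
    module
  have hconst := is_const_of_deriv_eq_zero (fun u => (hg u).differentiableAt)
    (fun u => (hg u).deriv) t a
  simp only [C, intervalIntegral.integral_same, neg_zero, exp_zero, one_smul] at hconst
  rw [← hconst, smul_smul, ← exp_add, add_neg_cancel, exp_zero, one_smul]

local notation "ℝ³" => EuclideanSpace ℝ (Fin 3)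

theorem cross3_self (a : ℝ³) : cross3 a a = 0 := by
  ext i; fin_cases i <;> simp [cross3] <;> ring

theorem inner_self_cross3 (a b : ℝ³) : inner ℝ a (cross3 a b) = 0 := by
  simp [cross3, PiLp.inner_apply, Fin.sum_univ_three]; ring

theorem inner_cross3_self (a b : ℝ³) : inner ℝ b (cross3 a b) = 0 := by
  simp [cross3, PiLp.inner_apply, Fin.sum_univ_three]; ring

noncomputable def cross3L : ℝ³ →L[ℝ] ℝ³ →L[ℝ] ℝ³ :=
  LinearMap.toContinuousLinearMap
    (LinearMap.toContinuousLinearMap.toLinearMap ∘ₗ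
      LinearMap.mk₂ ℝ cross3
        (fun a a' b => by ext i; fin_cases i <;> simp [cross3] <;> ring)
        (fun k a b => by ext i; fin_cases i <;> simp [cross3] <;> ring)
        (fun a b b' => by ext i; fin_cases i <;> simp [cross3] <;> ring)
        (fun k a b => by ext i; fin_cases i <;> simp [cross3] <;> ring))

@[simp]
theorem cross3L_apply (a b : ℝ³) : cross3L a b = cross3 a b := rfl

theorem HasDerivAt.cross3 {u v : ℝ → ℝ³} {u' v' : ℝ³} {x : ℝ}
    (hu : HasDerivAt u u' x) (hv : HasDerivAt v v' x) :
    HasDerivAt (fun x => cross3 (u x) (v x)) (cross3 (u x) v' + cross3 u' (v x)) x :=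
  cross3L.hasDerivAt_of_bilinear (fun _ => hu) (fun _ => hv)

theorem hasDerivAt_cross3_of_hasDerivAt_smul_add_smul {r v : ℝ → ℝ³} {α β t : ℝ}
    (hr : HasDerivAt r (v t) t) (hv : HasDerivAt v (α • r t + β • v t) t) :
    HasDerivAt (fun s => cross3 (r s) (v s)) (β • cross3 (r t) (v t)) t := by
  convert hr.cross3 hv using 1
  rw [cross3_self, add_zero, ← cross3L_apply (r t) (α • _ + _), map_add, map_smul, map_smul,
    cross3L_apply, cross3L_apply, cross3_self, smul_zero, zero_add]

theorem motion_is_planar_general (ε : ℝ) (r : ℝ → EuclideanSpace ℝ (Fin 3))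
    (hr : ContDiff ℝ 2 r) (hrne : ∀ t, r t ≠ 0)
    (heq : ∀ t, deriv (deriv r) t =
      (-(1 / ‖r t‖ ^ 3)) • r t +
        (ε / ‖r t‖ ^ 3) •
          ((4 / ‖r t‖ - ‖deriv r t‖ ^ 2) • r t +
            (4 * (inner ℝ (r t) (deriv r t) : ℝ)) • deriv r t))
    (h : ℝ → EuclideanSpace ℝ (Fin 3))
    (hh : ∀ t, h t = cross3 (r t) (deriv r t)) :
    ∀ t : ℝ, (inner ℝ (r t) (h 0) : ℝ) = 0 ∧ (inner ℝ (deriv r t) (h 0) : ℝ) = 0 := by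
  have hr' : ContDiff ℝ 1 (deriv r) := hr.deriv'
  set β : ℝ → ℝ := fun t => ε / ‖r t‖ ^ 3 * (4 * inner ℝ (r t) (deriv r t))
  have hβ : Continuous β := by
    have hnorm : ∀ t, ‖r t‖ ^ 3 ≠ 0 := fun t => pow_ne_zero _ (norm_ne_zero_iff.mpr (hrne t))
    exact (continuous_const.div (hr.continuous.norm.pow 3) hnorm).mul
      (continuous_const.mul (hr.continuous.inner hr'.continuous))
  have hh' (t : ℝ) : HasDerivAt h (β t • h t) t := by
    rw [funext hh]
    exact hasDerivAt_cross3_of_hasDerivAt_smul_add_smul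
      (α := -(1 / ‖r t‖ ^ 3) + ε / ‖r t‖ ^ 3 * (4 / ‖r t‖ - ‖deriv r t‖ ^ 2))
      (hr.differentiable (by norm_num) t).hasDerivAt
      ((hr'.differentiable one_ne_zero t).hasDerivAt.congr_deriv (by rw [heq t]; module))
  intro t
  have h_orth_h0 (x : ℝ³) (hx : inner ℝ x (h t) = 0) : inner ℝ x (h 0) = 0 := by
    rw [eq_exp_integral_smul_of_hasDerivAt hβ hh' 0 t, inner_smul_right] at hx
    exact (mul_eq_zero.mp hx).resolve_left (exp_ne_zero _)
  rw [hh] at h_orth_h0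
  exact ⟨h_orth_h0 _ (inner_self_cross3 _ _), h_orth_h0 _ (inner_cross3_self _ _)⟩

theorem motion_is_planar (ε : ℝ) (r : ℝ → EuclideanSpace ℝ (Fin 3))
    (hr : ContDiff ℝ 2 r) (hrne : ∀ t, r t ≠ 0)
    (heq : ∀ t, deriv (deriv r) t =
      (-(1 / ‖r t‖ ^ 3)) • r t +
        (ε / ‖r t‖ ^ 3) •
          ((4 / ‖r t‖ - ‖deriv r t‖ ^ 2) • r t +
            (4 * (inner ℝ (r t) (deriv r t) : ℝ)) • deriv r t))
    (h : ℝ → EuclideanSpace ℝ (Fin 3))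
    (hh : ∀ t, h t = cross3 (r t) (deriv r t)) (hh0 : h 0 ≠ 0) :
    ∀ t : ℝ, (inner ℝ (r t) (h 0) : ℝ) = 0 ∧ (inner ℝ (deriv r t) (h 0) : ℝ) = 0 :=
  motion_is_planar_general ε r hr hrne heq h hh
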